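/- arXiv:1501.02239 — 2 statements merged into one kernel-verified Lean document; each statement's English description precedes it below -/
import Mathlib

section
/- Let G be a finite graph and ω an acyclic orientation. Define the set of toric filters of P(G,[ω]) as those subsets J ⊆ V that are order ideals of P(G, ω') for some ω' obtained from ω by source-to-sink flips. Then the poset of toric filters of P(G,[ω]) ordered by inclusion is graded by cardinality: every nonempty toric filter J contains a toric filter J' with |J'| = |J| − 1. -/
/-- A directed cycle (closed directed walk with at least one edge). -/
def HasCycle {α : Type*} (r : α → α → Prop) : Prop :=
  ∃ (n : ℕ) (f : Fin (n + 1) → α),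
    (∀ i : Fin n, r (f i.castSucc) (f i.succ)) ∧ r (f (Fin.last n)) (f 0)

/-- `r` is an orientation of the simple graph `G`: each edge gets exactly one
direction. -/
def IsOrientation {V : Type*} (G : SimpleGraph V) (r : V → V → Prop) : Prop :=
  (∀ i j : V, G.Adj i j ↔ (r i j ∨ r j i)) ∧ ∀ i j : V, r i j → ¬ r j i

/-- The orientation obtained from `r` by reversing all edges incident to `v`. -/
def flipAt {V : Type*} (r : V → V → Prop) (v : V) : V → V → Prop :=
  fun i j => ((i = v ∨ j = v) ∧ r j i) ∨ (¬(i = v ∨ j = v) ∧ r i j)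

/-- A single source-to-sink flipAt: flipping at a source vertex. -/
def FlipStep {V : Type*} (r r' : V → V → Prop) : Prop :=
  ∃ v : V, (∀ u : V, ¬ r u v) ∧ r' = flipAt r v

/-- Toric equivalence: generated by source-to-sink flips. -/
def ToricEquiv {V : Type*} (r r' : V → V → Prop) : Prop :=
  Relation.ReflTransGen FlipStep r r'

/-- `I` is an order ideal (down-closed set) of the reachability poset of `r`. -/
def IsIdealOf {V : Type*} (r : V → V → Prop) (I : Set V) : Prop :=
  ∀ x y : V, Relation.ReflTransGen r x y → y ∈ I → x ∈ I

/-- `J` is an order filter (up-closed set) of the reachability poset of `r`. -/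
def IsFilterOf {V : Type*} (r : V → V → Prop) (J : Set V) : Prop :=
  ∀ x y : V, Relation.ReflTransGen r x y → x ∈ J → y ∈ J

/-- `J` is a toric filter of `P(G,[ω])`: it is an order ideal of `P(G,ω')` for some
`ω'` obtained from `ω` by source-to-sink flips. -/
def IsToricFilter {V : Type*} (r : V → V → Prop) (J : Set V) : Prop :=
  ∃ r' : V → V → Prop, ToricEquiv r r' ∧ IsIdealOf r' J

/-!
Toric equivalence preserves acyclicity, since a source-to-sink flip turns the source into a sink,
which lies on no cycle. So a toric filter `J` is an order ideal of a finite acyclic orientation;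
removing an element of `J` that is maximal in the reachability order leaves an order ideal of the
same orientation.
-/

lemma Relation.TransGen.exists_fin_walk {α : Type*} {r : α → α → Prop} {a b : α}
    (h : Relation.TransGen r a b) :
    ∃ (n : ℕ) (f : Fin (n + 1) → α), f 0 = a ∧
      (∀ i : Fin n, r (f i.castSucc) (f i.succ)) ∧ r (f (Fin.last n)) b := by
  induction h with
  | single hab => exact ⟨0, fun _ => a, rfl, fun i => i.elim0, hab⟩
  | @tail b c _ hbc ih =>
    obtain ⟨n, f, hf0, hstep, hlast⟩ := ih
    refine ⟨n + 1, Fin.snoc f b, by simpa [Fin.snoc] using hf0, fun i => ?_, by simpa using hbc⟩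
    rcases Fin.eq_castSucc_or_eq_last i with ⟨j, rfl⟩ | rfl
    · simpa only [Fin.succ_castSucc, Fin.snoc_castSucc] using hstep j
    · simpa [show (Fin.last n).succ = Fin.last (n + 1) from rfl] using hlast

lemma HasCycle.of_transGen {α : Type*} {r : α → α → Prop} {a : α}
    (h : Relation.TransGen r a a) : HasCycle r := by
  obtain ⟨n, f, hf0, hstep, hlast⟩ := h.exists_fin_walk
  exact ⟨n, f, hstep, hf0 ▸ hlast⟩

section flipAt

variable {V : Type*} {r : V → V → Prop} {v : V}

lemma not_flipAt_self_left (hsrc : ∀ u : V, ¬ r u v) (j : V) : ¬ flipAt r v v j := by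
  rintro (⟨_, hj⟩ | ⟨hne, _⟩)
  · exact hsrc j hj
  · exact hne (Or.inl rfl)

lemma rel_of_flipAt_of_ne {i j : V} (h : flipAt r v i j) (hi : i ≠ v) (hj : j ≠ v) : r i j := by
  rcases h with ⟨hij | hij, _⟩ | ⟨_, h⟩
  · exact absurd hij hi
  · exact absurd hij hj
  · exact h

lemma not_hasCycle_flipAt (hsrc : ∀ u : V, ¬ r u v) (hacyc : ¬ HasCycle r) :
    ¬ HasCycle (flipAt r v) := by
  rintro ⟨n, f, hstep, hlast⟩
  by_cases hv : ∃ k, f k = v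
  · obtain ⟨k, rfl⟩ := hv
    rcases Fin.eq_castSucc_or_eq_last k with ⟨j, rfl⟩ | rfl
    · exact not_flipAt_self_left hsrc _ (hstep j)
    · exact not_flipAt_self_left hsrc _ hlast
  · rw [not_exists] at hv
    exact hacyc ⟨n, f, fun i => rel_of_flipAt_of_ne (hstep i) (hv _) (hv _),
      rel_of_flipAt_of_ne hlast (hv _) (hv _)⟩

end flipAt

lemma ToricEquiv.not_hasCycle {V : Type*} {r r' : V → V → Prop}
    (h : ToricEquiv r r') (hacyc : ¬ HasCycle r) : ¬ HasCycle r' := by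
  induction h with
  | refl => exact hacyc
  | tail _ hstep ih =>
    obtain ⟨v, hsrc, rfl⟩ := hstep
    exact not_hasCycle_flipAt hsrc ih

lemma exists_maximal_of_not_hasCycle {V : Type*} [Finite V] {r : V → V → Prop}
    (hacyc : ¬ HasCycle r) {s : Set V} (hs : s.Nonempty) :
    ∃ m ∈ s, ∀ y ∈ s, ¬ Relation.TransGen r m y := by
  have : IsTrans V (flip (Relation.TransGen r)) := ⟨fun _ _ _ hab hbc => hbc.trans hab⟩
  have : Std.Irrefl (flip (Relation.TransGen r)) := ⟨fun _ h => hacyc (.of_transGen h)⟩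
  exact (Finite.wellFounded_of_trans_of_irrefl (flip (Relation.TransGen r))).has_min s hs

lemma IsIdealOf.diff_singleton {V : Type*} {r : V → V → Prop} {I : Set V} {m : V}
    (hI : IsIdealOf r I) (hmax : ∀ y ∈ I, ¬ Relation.TransGen r m y) :
    IsIdealOf r (I \ {m}) := by
  rintro x y hxy ⟨hyI, hym⟩
  refine ⟨hI x y hxy hyI, ?_⟩
  rintro rfl
  rcases Relation.reflTransGen_iff_eq_or_transGen.mp hxy with rfl | hxy
  · exact hym rfl
  · exact hmax y hyI hxy

theorem stmt_11_general (V : Type) [Fintype V] (r : V → V → Prop)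
    (hacyc : ¬ HasCycle r) (J : Set V)
    (hJ : IsToricFilter r J) (hne : J.Nonempty) :
    ∃ J' : Set V, J' ⊆ J ∧ IsToricFilter r J' ∧ Nat.card J' = Nat.card J - 1 := by
  obtain ⟨r', hequiv, hideal⟩ := hJ
  obtain ⟨m, hmJ, hmax⟩ := exists_maximal_of_not_hasCycle (hequiv.not_hasCycle hacyc) hne
  refine ⟨J \ {m}, Set.sdiff_subset, ⟨r', hequiv, hideal.diff_singleton hmax⟩, ?_⟩
  rw [Nat.card_coe_set_eq, Nat.card_coe_set_eq, Set.ncard_sdiff_singleton_of_mem hmJ]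

/-- The poset of toric filters of P(G,[ω]) ordered by inclusion is graded
by cardinality: every nonempty toric filter J contains a toric filter J' of
cardinality |J| − 1. -/
theorem stmt_11 (V : Type) [Fintype V] (G : SimpleGraph V) (r : V → V → Prop)
    (hor : IsOrientation G r) (hacyc : ¬ HasCycle r) (J : Set V)
    (hJ : IsToricFilter r J) (hne : J.Nonempty) :
    ∃ J' : Set V, J' ⊆ J ∧ IsToricFilter r J' ∧ Nat.card J' = Nat.card J - 1 :=
  stmt_11_general V r hacyc J hJ hne
end

section
/- Let G be a finite graph with acyclic orientation ω. A subset J ⊆ V is an order ideal of P(G, ω') for some ω' torically equivalent to ω if and only if its complement V − J is an order ideal of P(G, ω'') for some ω'' torically equivalent to ω. -/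
/-!
If `J` is an order ideal of an acyclic orientation `ω'`, a minimal element of `J` is a source of
`ω'`; flipping it leaves an acyclic orientation in which the rest of `J` is still an ideal.
Flipping all of `J` in this way reverses exactly the edges between `J` and `V - J`, all of which
pointed into `J` and now point out of it, so `V - J` becomes an ideal. The converse is the same
statement applied to `V - J`.
-/

open Relation

variable {V : Type*}

def IsAcyclic (r : V → V → Prop) : Prop :=
  ∀ x, ¬ TransGen r x x

lemma exists_path_of_reflTransGen {r : V → V → Prop} {a b : V} (h : ReflTransGen r a b) :
    ∃ (n : ℕ) (f : Fin (n + 1) → V), f 0 = a ∧ f (Fin.last n) = b ∧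
      ∀ i : Fin n, r (f i.castSucc) (f i.succ) := by
  induction h using ReflTransGen.head_induction_on with
  | refl => exact ⟨0, fun _ => b, rfl, rfl, Fin.elim0⟩
  | @head a c hac _ ih =>
    obtain ⟨n, f, hf0, hfn, hf⟩ := ih
    refine ⟨n + 1, Fin.cons a f, rfl, by simpa [← Fin.succ_last] using hfn, fun i => ?_⟩
    cases i using Fin.cases with
    | zero => simpa [hf0] using hac
    | succ i => simpa [← Fin.succ_castSucc] using hf i

lemma HasCycle.of_transGen_self {r : V → V → Prop} {x : V} (h : TransGen r x x) : HasCycle r := by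
  obtain ⟨y, hxy, hyx⟩ := TransGen.tail'_iff.mp h
  obtain ⟨n, f, hf0, hfn, hf⟩ := exists_path_of_reflTransGen hxy
  exact ⟨n, f, hf, by rwa [hf0, hfn]⟩

lemma isAcyclic_of_not_hasCycle {r : V → V → Prop} (h : ¬ HasCycle r) : IsAcyclic r :=
  fun _ hx => h (HasCycle.of_transGen_self hx)

section FlipAt

variable {r : V → V → Prop} {v : V}

lemma not_flipAt_of_source (hv : ∀ u, ¬ r u v) (b : V) : ¬ flipAt r v v b := by
  rintro (⟨-, h⟩ | ⟨h, -⟩)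
  · exact hv b h
  · exact h (Or.inl rfl)

lemma rel_of_flipAt {a b : V} (h : flipAt r v a b) (ha : a ≠ v) (hb : b ≠ v) : r a b := by
  rcases h with ⟨ha' | hb', -⟩ | ⟨-, h⟩
  exacts [absurd ha' ha, absurd hb' hb, h]

/-- Flipping a source `v` turns it into a sink, so a path of the flipped orientation that does not
end at `v` avoids `v` altogether. -/
lemma reflTransGen_of_reflTransGen_flipAt (hv : ∀ u, ¬ r u v) {a b : V}
    (h : ReflTransGen (flipAt r v) a b) (hb : b ≠ v) : ReflTransGen r a b ∧ a ≠ v := by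
  induction h using ReflTransGen.head_induction_on with
  | refl => exact ⟨.refl, hb⟩
  | @head a c hac _ ih =>
    obtain ⟨hcb, hc⟩ := ih
    have ha : a ≠ v := by rintro rfl; exact not_flipAt_of_source hv c hac
    exact ⟨.head (rel_of_flipAt hac ha hc) hcb, ha⟩

lemma IsAcyclic.flipAt (hr : IsAcyclic r) (hv : ∀ u, ¬ r u v) : IsAcyclic (flipAt r v) := by
  intro x hx
  obtain ⟨y, hxy, hyx⟩ := TransGen.head'_iff.mp hx
  obtain ⟨hyx', hy⟩ := reflTransGen_of_reflTransGen_flipAt hv hyx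
    (by rintro rfl; exact not_flipAt_of_source hv y hxy)
  obtain ⟨-, hx'⟩ := reflTransGen_of_reflTransGen_flipAt hv (.single hxy) hy
  exact hr x (TransGen.head'_iff.mpr ⟨y, rel_of_flipAt hxy hx' hy, hyx'⟩)

lemma IsIdealOf.flipAt_diff {A : Set V} (hA : IsIdealOf r A) (hv : ∀ u, ¬ r u v) :
    IsIdealOf (flipAt r v) (A \ {v}) := by
  rintro x y hxy ⟨hyA, hy⟩
  obtain ⟨hxy', hx⟩ := reflTransGen_of_reflTransGen_flipAt hv hxy hy
  exact ⟨hA x y hxy' hyA, hx⟩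

end FlipAt

lemma IsAcyclic.of_toricEquiv {r r' : V → V → Prop} (h : ToricEquiv r r') (hr : IsAcyclic r) :
    IsAcyclic r' := by
  induction h with
  | refl => exact hr
  | tail _ hstep ih =>
    obtain ⟨v, hv, rfl⟩ := hstep
    exact ih.flipAt hv

lemma IsAcyclic.exists_source_mem {r : V → V → Prop} (hr : IsAcyclic r) {A : Finset V}
    (hne : A.Nonempty) (hA : IsIdealOf r A) : ∃ v ∈ A, ∀ u, ¬ r u v := by
  have : IsStrictOrder V (TransGen r) := { irrefl := hr, trans := fun _ _ _ => TransGen.trans }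
  obtain ⟨v, hvA, hmin⟩ :=
    (Set.wellFoundedOn_iff.mp (A.finite_toSet.wellFoundedOn (r := TransGen r))).has_min _ hne
  refine ⟨v, hvA, fun u huv => ?_⟩
  have huA : u ∈ A := hA u v (.single huv) hvA
  exact hmin u huA ⟨.single huv, huA, hvA⟩

def flipAcross (r : V → V → Prop) (S : Set V) : V → V → Prop :=
  fun i j => ((i ∈ S ↔ j ∈ S) ∧ r i j) ∨ (¬ (i ∈ S ↔ j ∈ S) ∧ r j i)

@[simp]
lemma flipAcross_empty (r : V → V → Prop) : flipAcross r ∅ = r := by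
  funext i j
  simp [flipAcross]

section FlipAcross

variable {r : V → V → Prop}

lemma flipAcross_flipAt {S : Set V} {v : V} (hv : v ∈ S) :
    flipAcross (flipAt r v) (S \ {v}) = flipAcross r S := by
  funext i j
  by_cases hi : i = v <;> by_cases hj : j = v <;> by_cases hiS : i ∈ S <;> by_cases hjS : j ∈ S <;>
    simp [flipAcross, flipAt, hi, hj, hiS, hjS, hv]

theorem toricEquiv_flipAcross (hr : IsAcyclic r) (A : Finset V) (hA : IsIdealOf r A) :
    ToricEquiv r (flipAcross r A) := by
  classical
  induction A using Finset.strongInduction generalizing r with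
  | H A ih =>
    rcases A.eq_empty_or_nonempty with rfl | hne
    · rw [Finset.coe_empty, flipAcross_empty]
      exact ReflTransGen.refl
    obtain ⟨v, hvA, hv⟩ := hr.exists_source_mem hne hA
    have hflip : ToricEquiv (flipAt r v) (flipAcross (flipAt r v) ↑(A.erase v)) :=
      ih _ (A.erase_ssubset hvA) (hr.flipAt hv) (by simpa using hA.flipAt_diff hv)
    rw [Finset.coe_erase, flipAcross_flipAt hvA] at hflip
    exact .head ⟨v, hv, rfl⟩ hflip

lemma IsIdealOf.compl_flipAcross {A : Set V} (hA : IsIdealOf r A) :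
    IsIdealOf (flipAcross r A) Aᶜ := by
  have step : ∀ a b, flipAcross r A a b → b ∉ A → a ∉ A := by
    rintro a b (⟨hab, -⟩ | ⟨-, hba⟩) hb ha
    · exact hb (hab.mp ha)
    · exact hb (hA b a (.single hba) ha)
  intro x y hxy hy
  induction hxy using ReflTransGen.head_induction_on with
  | refl => exact hy
  | head hxz _ ih => exact step _ _ hxz ih

end FlipAcross

lemma IsAcyclic.exists_toricEquiv_isIdealOf_compl [Finite V] {r : V → V → Prop}
    (hr : IsAcyclic r) {J : Set V} (h : ∃ r', ToricEquiv r r' ∧ IsIdealOf r' J) :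
    ∃ r'', ToricEquiv r r'' ∧ IsIdealOf r'' Jᶜ := by
  obtain ⟨r', hrr', hJ⟩ := h
  lift J to Finset V using J.toFinite
  exact ⟨_, hrr'.trans (toricEquiv_flipAcross (hr.of_toricEquiv hrr') J hJ), hJ.compl_flipAcross⟩

theorem stmt_12_general (V : Type) [Fintype V] (r : V → V → Prop)
    (hacyc : ¬ HasCycle r) (J : Set V) :
    (∃ r' : V → V → Prop, ToricEquiv r r' ∧ IsIdealOf r' J) ↔
      (∃ r'' : V → V → Prop, ToricEquiv r r'' ∧ IsIdealOf r'' Jᶜ) := by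
  have hr := isAcyclic_of_not_hasCycle hacyc
  refine ⟨hr.exists_toricEquiv_isIdealOf_compl, fun h => ?_⟩
  simpa using hr.exists_toricEquiv_isIdealOf_compl h

/-- J is an order ideal of P(G,ω') for some ω' torically equivalent to ω
iff its complement V − J is an order ideal of P(G,ω'') for some ω'' torically
equivalent to ω. -/
theorem stmt_12 (V : Type) [Fintype V] (G : SimpleGraph V) (r : V → V → Prop)
    (hor : IsOrientation G r) (hacyc : ¬ HasCycle r) (J : Set V) :
    (∃ r' : V → V → Prop, ToricEquiv r r' ∧ IsIdealOf r' J) ↔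
      (∃ r'' : V → V → Prop, ToricEquiv r r'' ∧ IsIdealOf r'' Jᶜ) :=
  stmt_12_general V r hacyc J
end
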